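/- arXiv:2112.12230 — 7 statements merged into one kernel-verified Lean document; each statement's English description precedes it below -/
import Mathlib

section
/- Let π be a finite abelian group and let k ≤ n be natural numbers. Then the number of π-valued k-cocycles on the standard n-simplex Δⁿ equals |π|^(n choose k). (This is the cardinality of the set of n-simplices of the standard simplicial model of the Eilenberg–MacLane space K(π,k).) -/
/-- A `k`-face of the standard `n`-simplex: a `(k+1)`-element subset of `{0,…,n}`. -/
def SimplexFace (n k : ℕ) : Type := {s : Finset (Fin (n + 1)) // s.card = k + 1}

/-- A `π`-valued `k`-cochain on the standard `n`-simplex. -/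
abbrev Cochain (n k : ℕ) (π : Type*) [AddCommGroup π] : Type _ := SimplexFace n k → π

/-- The coboundary of a `k`-cochain: its value on a `(k+1)`-face `t = {a₀ < ⋯ < a_{k+1}}`
is `Σ_i (-1)^i • z (t \ {a_i})`, where `i` is the position of `a_i` in `t`. -/
def coboundary {n k : ℕ} {π : Type*} [AddCommGroup π] (z : Cochain n k π) :
    Cochain n (k + 1) π :=
  fun t => ∑ a ∈ t.1.attach,
    ((-1 : ℤ) ^ ((t.1.filter (fun x => x < a.1)).card)) •
      z ⟨t.1.erase a.1, by simp [Finset.card_erase_of_mem a.2, t.2]⟩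

section Aux

variable {n k : ℕ} {π : Type*} [AddCommGroup π]

/-- Single term of the coboundary, as a total function. -/
def cterm (z : Cochain n k π) (T : Finset (Fin (n + 1))) (hT : T.card = k + 2)
    (a : Fin (n + 1)) : π :=
  if h : a ∈ T then
    ((-1 : ℤ) ^ ((T.filter (fun x => x < a)).card)) •
      z ⟨T.erase a, by simp [Finset.card_erase_of_mem h, hT]⟩
  else 0

lemma coboundary_apply (z : Cochain n k π) (T : Finset (Fin (n + 1))) (hT : T.card = k + 2) :
    coboundary z ⟨T, hT⟩ = ∑ a ∈ T, cterm z T hT a := by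
  unfold coboundary
  rw [← Finset.sum_attach T (cterm z T hT)]
  refine Finset.sum_congr rfl fun a _ => ?_
  rw [cterm, dif_pos a.2]

/-- Term of the "reconstruction" sum at a non-0 face `s`. -/
def dterm (z : Cochain n k π) (s : Finset (Fin (n + 1))) (hs : s.card = k + 1)
    (h0 : (0 : Fin (n + 1)) ∉ s) (a : Fin (n + 1)) : π :=
  if h : a ∈ s then
    ((-1 : ℤ) ^ ((s.filter (fun x => x < a)).card)) •
      z ⟨(insert 0 s).erase a, by
        simp [Finset.card_erase_of_mem (Finset.mem_insert_of_mem h),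
          Finset.card_insert_of_notMem h0, hs]⟩
  else 0

lemma zero_mem_dface (s : Finset (Fin (n + 1))) (h0 : (0 : Fin (n + 1)) ∉ s) {a : Fin (n + 1)}
    (ha : a ∈ s) : (0 : Fin (n + 1)) ∈ (insert 0 s).erase a := by
  have : a ≠ 0 := fun h => h0 (h ▸ ha)
  exact Finset.mem_erase.2 ⟨Ne.symm this, Finset.mem_insert_self _ _⟩

/-- Key computation: the coboundary at the cone face `insert 0 s`. -/
lemma coboundary_insert (z : Cochain n k π) (s : Finset (Fin (n + 1))) (hs : s.card = k + 1)
    (h0 : (0 : Fin (n + 1)) ∉ s) :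
    coboundary z ⟨insert 0 s, by simp [Finset.card_insert_of_notMem h0, hs]⟩
      = z ⟨s, hs⟩ - ∑ a ∈ s, dterm z s hs h0 a := by
  rw [coboundary_apply, Finset.sum_insert h0]
  have h00 : cterm z (insert 0 s) (by simp [Finset.card_insert_of_notMem h0, hs]) 0
      = z ⟨s, hs⟩ := by
    rw [cterm, dif_pos (Finset.mem_insert_self _ _)]
    have hf : (insert (0 : Fin (n+1)) s).filter (fun x => x < 0) = ∅ := by
      apply Finset.filter_false_of_mem
      intro x _
      simp [Fin.not_lt_zero]
    have he : (insert (0 : Fin (n+1)) s).erase 0 = s := Finset.erase_insert h0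
    rw [hf]
    simp only [Finset.card_empty, pow_zero, one_smul]
    congr 1
    exact Subtype.ext he
  rw [h00, sub_eq_add_neg, ← Finset.sum_neg_distrib]
  congr 1
  refine Finset.sum_congr rfl fun a ha => ?_
  have ha' : a ∈ insert (0 : Fin (n+1)) s := Finset.mem_insert_of_mem ha
  have hane : a ≠ 0 := fun h => h0 (h ▸ ha)
  rw [cterm, dif_pos ha', dterm, dif_pos ha]
  have hpos : (0 : Fin (n+1)) < a := Fin.pos_of_ne_zero hane
  have hfilter : (insert (0 : Fin (n+1)) s).filter (fun x => x < a)
      = insert 0 (s.filter (fun x => x < a)) := by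
    rw [Finset.filter_insert, if_pos hpos]
  have h0f : (0 : Fin (n+1)) ∉ s.filter (fun x => x < a) :=
    fun h => h0 (Finset.mem_of_mem_filter _ h)
  rw [hfilter, Finset.card_insert_of_notMem h0f, pow_succ, mul_comm, neg_one_mul, neg_smul]

/-- Replace the values of `z` on faces not containing `0` by the value forced
by the cocycle condition on the cone face. -/
def fix (z : Cochain n k π) : Cochain n k π := fun s =>
  if h : (0 : Fin (n + 1)) ∈ s.1 then z s
  else ∑ a ∈ s.1, dterm z s.1 s.2 h a

lemma fix_apply_zero_mem (z : Cochain n k π) (s : SimplexFace n k)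
    (h : (0 : Fin (n + 1)) ∈ s.1) : fix z s = z s := dif_pos h

lemma dterm_congr {z w : Cochain n k π}
    (hzw : ∀ s : SimplexFace n k, (0 : Fin (n + 1)) ∈ s.1 → z s = w s)
    (s : Finset (Fin (n + 1))) (hs : s.card = k + 1) (h0 : (0 : Fin (n + 1)) ∉ s)
    (a : Fin (n + 1)) : dterm z s hs h0 a = dterm w s hs h0 a := by
  unfold dterm
  split
  · rename_i h
    congr 1
    exact hzw _ (zero_mem_dface s h0 h)
  · rfl

lemma fix_congr {z w : Cochain n k π}
    (hzw : ∀ s : SimplexFace n k, (0 : Fin (n + 1)) ∈ s.1 → z s = w s) :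
    fix z = fix w := by
  funext s
  unfold fix
  split
  · rename_i h; exact hzw s h
  · rename_i h; exact Finset.sum_congr rfl fun a _ => dterm_congr hzw s.1 s.2 h a

lemma fix_eq_of_cocycle {z : Cochain n k π} (hz : coboundary z = 0) : fix z = z := by
  funext s
  unfold fix
  split
  · rfl
  · rename_i h
    obtain ⟨t, ht⟩ := s
    have := coboundary_insert z t ht h
    rw [hz] at this
    have : (0 : π) = z ⟨t, ht⟩ - ∑ a ∈ t, dterm z t ht h a := this
    have := sub_eq_zero.1 this.symm
    simpa using this.symm

/-- Double term in the expansion of `coboundary (fix z)` at a `(k+1)`-face avoiding `0`. -/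
def G (z : Cochain n k π) (t : Finset (Fin (n + 1))) (ht : t.card = k + 2)
    (h0 : (0 : Fin (n + 1)) ∉ t) (a b : Fin (n + 1)) : π :=
  if h : a ∈ t ∧ b ∈ t ∧ b ≠ a then
    ((-1 : ℤ) ^ ((t.filter (fun x => x < a)).card + ((t.erase a).filter (fun x => x < b)).card)) •
      z ⟨((insert 0 t).erase a).erase b, by
        have ha0 : a ≠ 0 := fun hh => h0 (hh ▸ h.1)
        have hbma : b ∈ (insert (0:Fin (n+1)) t).erase a :=
          Finset.mem_erase.2 ⟨h.2.2, Finset.mem_insert_of_mem h.2.1⟩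
        have hama : a ∈ insert (0:Fin (n+1)) t := Finset.mem_insert_of_mem h.1
        rw [Finset.card_erase_of_mem hbma, Finset.card_erase_of_mem hama,
          Finset.card_insert_of_notMem h0, ht]; omega⟩
  else 0

/-- The swapped term is the negative. -/
lemma G_swap (z : Cochain n k π) (t : Finset (Fin (n + 1))) (ht : t.card = k + 2)
    (h0 : (0 : Fin (n + 1)) ∉ t) (a b : Fin (n + 1)) :
    G z t ht h0 a b + G z t ht h0 b a = 0 := by
  rcases eq_or_ne a b with rfl | hab
  · unfold G
    rw [dif_neg (by simp)]
    simp
  · -- wlog a < b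
    wlog hlt : a < b generalizing a b
    · rw [add_comm]
      exact this b a hab.symm (lt_of_le_of_ne (not_lt.1 hlt) hab.symm)
    rcases em (a ∈ t ∧ b ∈ t) with ⟨hat, hbt⟩ | hmem
    swap
    · unfold G
      rw [dif_neg (fun h => hmem ⟨h.1, h.2.1⟩), dif_neg (fun h => hmem ⟨h.2.1, h.1⟩)]
      simp
    unfold G
    rw [dif_pos ⟨hat, hbt, hab.symm⟩, dif_pos ⟨hbt, hat, hab⟩]
    -- positions
    have hfe1 : (t.erase a).filter (fun x => x < b) = (t.filter (fun x => x < b)).erase a :=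
      by rw [Finset.filter_erase]
    have hfe2 : (t.erase b).filter (fun x => x < a) = (t.filter (fun x => x < a)).erase b :=
      by rw [Finset.filter_erase]
    have hafb : a ∈ t.filter (fun x => x < b) := Finset.mem_filter.2 ⟨hat, hlt⟩
    have hbfa : b ∉ t.filter (fun x => x < a) := fun hh =>
      absurd (Finset.mem_filter.1 hh).2 (not_lt.2 hlt.le)
    have hc1 : ((t.erase a).filter (fun x => x < b)).card + 1
        = (t.filter (fun x => x < b)).card := by
      rw [hfe1]; exact Finset.card_erase_add_one hafb
    have hc2 : ((t.erase b).filter (fun x => x < a)).card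
        = (t.filter (fun x => x < a)).card := by
      rw [hfe2, Finset.erase_eq_of_notMem hbfa]
    -- faces agree
    have hface : (((insert (0:Fin (n+1)) t).erase a).erase b : Finset (Fin (n+1)))
        = ((insert (0:Fin (n+1)) t).erase b).erase a := Finset.erase_right_comm
    set A := (t.filter (fun x => x < a)).card with hA
    set B := ((t.erase a).filter (fun x => x < b)).card with hB
    rw [hc2, ← hc1]
    have hexp : B + 1 + A = (A + B) + 1 := by ring
    rw [hexp, pow_succ]
    have : z ⟨((insert (0:Fin (n+1)) t).erase b).erase a, by
        have ha0 : b ≠ 0 := fun hh => h0 (hh ▸ hbt)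
        have hbma : a ∈ (insert (0:Fin (n+1)) t).erase b :=
          Finset.mem_erase.2 ⟨hab, Finset.mem_insert_of_mem hat⟩
        have hama : b ∈ insert (0:Fin (n+1)) t := Finset.mem_insert_of_mem hbt
        rw [Finset.card_erase_of_mem hbma, Finset.card_erase_of_mem hama,
          Finset.card_insert_of_notMem h0, ht]; omega⟩
        = z ⟨((insert (0:Fin (n+1)) t).erase a).erase b, by
        have ha0 : a ≠ 0 := fun hh => h0 (hh ▸ hat)
        have hbma : b ∈ (insert (0:Fin (n+1)) t).erase a :=
          Finset.mem_erase.2 ⟨hab.symm, Finset.mem_insert_of_mem hbt⟩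
        have hama : a ∈ insert (0:Fin (n+1)) t := Finset.mem_insert_of_mem hat
        rw [Finset.card_erase_of_mem hbma, Finset.card_erase_of_mem hama,
          Finset.card_insert_of_notMem h0, ht]; omega⟩ := by
      congr 1
      exact Subtype.ext hface.symm
    rw [this, mul_comm, neg_one_mul, neg_smul]
    exact add_neg_cancel _

lemma G_diag (z : Cochain n k π) (t : Finset (Fin (n + 1))) (ht : t.card = k + 2)
    (h0 : (0 : Fin (n + 1)) ∉ t) (a : Fin (n + 1)) : G z t ht h0 a a = by
  exact 0 := by
  unfold G
  rw [dif_neg (by simp)]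

lemma coboundary_fix (z : Cochain n k π) : coboundary (fix z) = 0 := by
  funext tt
  obtain ⟨t, ht⟩ := tt
  show coboundary (fix z) ⟨t, ht⟩ = 0
  by_cases h0t : (0 : Fin (n + 1)) ∈ t
  · -- cone face: cancellation by construction
    set s := t.erase 0 with hsdef
    have h0s : (0 : Fin (n + 1)) ∉ s := Finset.notMem_erase _ _
    have hs : s.card = k + 1 := by
      rw [hsdef, Finset.card_erase_of_mem h0t, ht]
      omega
    have hts : t = insert 0 s := (Finset.insert_erase h0t).symm
    have hface : (⟨t, ht⟩ : SimplexFace n (k+1))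
        = ⟨insert 0 s, by simp [Finset.card_insert_of_notMem h0s, hs]⟩ :=
      Subtype.ext hts
    rw [hface, coboundary_insert (fix z) s hs h0s,
      show fix z ⟨s, hs⟩ = ∑ a ∈ s, dterm z s hs h0s a from dif_neg h0s]
    have : ∀ a ∈ s, dterm (fix z) s hs h0s a = dterm z s hs h0s a := fun a _ =>
      dterm_congr (fun u hu => fix_apply_zero_mem z u hu) s hs h0s a
    rw [Finset.sum_congr rfl this]
    exact sub_self _
  · -- face avoiding 0 : pairwise cancellation
    have expand : coboundary (fix z) ⟨t, ht⟩ = ∑ p ∈ t ×ˢ t, G z t ht h0t p.1 p.2 := by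
      rw [coboundary_apply, Finset.sum_product]
      refine Finset.sum_congr rfl fun a hat => ?_
      have ha0 : a ≠ 0 := fun hh => h0t (hh ▸ hat)
      rw [cterm, dif_pos hat]
      have h0e : (0 : Fin (n + 1)) ∉ t.erase a := fun hh =>
        h0t (Finset.mem_of_mem_erase hh)
      have hse : (t.erase a).card = k + 1 := by
        rw [Finset.card_erase_of_mem hat, ht]
        omega
      have hfixe : fix z ⟨t.erase a, by simp [Finset.card_erase_of_mem hat, ht]⟩
          = ∑ b ∈ t.erase a, dterm z (t.erase a) hse h0e b := by
        exact dif_neg h0e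
      rw [hfixe, Finset.smul_sum]
      rw [← Finset.sum_erase t (f := fun b => G z t ht h0t a b) (G_diag z t ht h0t a)]
      refine Finset.sum_congr rfl fun b hbe => ?_
      obtain ⟨hba, hbt⟩ := Finset.mem_erase.1 hbe
      rw [dterm, dif_pos hbe, G, dif_pos ⟨hat, hbt, hba⟩, smul_smul, ← pow_add]
      congr 1
      refine congrArg z (Subtype.ext ?_)
      show (insert (0:Fin (n+1)) (t.erase a)).erase b = ((insert 0 t).erase a).erase b
      rw [Finset.erase_insert_of_ne (fun hh => ha0 hh.symm)]
    rw [expand]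
    refine Finset.sum_involution (fun p _ => Prod.swap p) ?_ ?_ ?_ ?_
    · exact fun p _ => G_swap z t ht h0t p.1 p.2
    · intro p _ hp hswap
      apply hp
      have h12 : p.1 = p.2 := by
        have := congrArg Prod.fst hswap
        simpa [Prod.swap] using this.symm
      rw [h12]
      exact G_diag z t ht h0t p.2
    · intro p hps
      rcases Finset.mem_product.1 hps with ⟨h1, h2⟩
      exact Finset.mem_product.2 ⟨h2, h1⟩
    · intro p _; rfl

instance : Finite (SimplexFace n k) := by
  unfold SimplexFace; infer_instance

/-- Cocycles are determined by their values on faces containing the vertex `0`. -/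
def cocycleEquiv :
    {z : Cochain n k π // coboundary z = 0}
      ≃ ({s : SimplexFace n k // (0 : Fin (n + 1)) ∈ s.1} → π) where
  toFun z s := z.1 s.1
  invFun y := ⟨fix (fun s => if h : (0 : Fin (n + 1)) ∈ s.1 then y ⟨s, h⟩ else 0),
    coboundary_fix _⟩
  left_inv z := by
    apply Subtype.ext
    show fix _ = z.1
    rw [fix_congr (w := z.1) (fun s hs => dif_pos hs)]
    exact fix_eq_of_cocycle z.2
  right_inv y := by
    funext s
    show fix _ s.1 = y s
    rw [fix_apply_zero_mem _ _ s.2, dif_pos s.2]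

def faceEquiv (n k : ℕ) : {s : SimplexFace n k // (0 : Fin (n + 1)) ∈ s.1}
      ≃ {u // u ∈ Finset.powersetCard k ((Finset.univ : Finset (Fin (n + 1))).erase 0)} where
  toFun s := ⟨s.1.1.erase 0, by
    rw [Finset.mem_powersetCard]
    constructor
    · intro x hx
      exact Finset.mem_erase.2 ⟨(Finset.mem_erase.1 hx).1, Finset.mem_univ x⟩
    · rw [Finset.card_erase_of_mem s.2, s.1.2]
      omega⟩
  invFun u := by
    have hu := Finset.mem_powersetCard.1 u.2
    have h0u : (0 : Fin (n + 1)) ∉ u.1 := fun h =>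
      (Finset.mem_erase.1 (hu.1 h)).1 rfl
    exact ⟨⟨insert 0 u.1, by rw [Finset.card_insert_of_notMem h0u, hu.2]⟩,
      Finset.mem_insert_self _ _⟩
  left_inv s := by
    apply Subtype.ext
    apply Subtype.ext
    exact Finset.insert_erase s.2
  right_inv u := by
    have hu := Finset.mem_powersetCard.1 u.2
    have h0u : (0 : Fin (n + 1)) ∉ u.1 := fun h =>
      (Finset.mem_erase.1 (hu.1 h)).1 rfl
    apply Subtype.ext
    exact Finset.erase_insert h0u

lemma card_zero_faces :
    Nat.card {s : SimplexFace n k // (0 : Fin (n + 1)) ∈ s.1} = n.choose k := by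
  rw [Nat.card_congr (faceEquiv n k), Nat.card_eq_fintype_card, Fintype.card_coe,
    Finset.card_powersetCard, Finset.card_erase_of_mem (Finset.mem_univ _),
    Finset.card_univ, Fintype.card_fin]
  norm_num

end Aux

/-- For a finite abelian group `π` and `k ≤ n`, the number of `π`-valued `k`-cocycles on the
standard `n`-simplex equals `|π| ^ (n choose k)`; this is the number of `n`-simplices of the
standard simplicial model of `K(π, k)`. -/
theorem card_cocycles (n k : ℕ) (hkn : k ≤ n) (π : Type*) [AddCommGroup π] [Fintype π] :
    Nat.card {z : Cochain n k π // coboundary z = 0} = Fintype.card π ^ n.choose k := by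
  rw [Nat.card_congr (cocycleEquiv (n := n) (k := k) (π := π)), Nat.card_fun,
    card_zero_faces, Nat.card_eq_fintype_card]
end

section
/- Let π be an abelian group and let k ≤ n be natural numbers. Given an arbitrary π-valued function w defined on the set of k-faces of Δⁿ that contain the vertex 0, there exists a k-cocycle z on Δⁿ whose restriction to the k-faces containing 0 equals w; it is given on a k-face {a₀ < ⋯ < a_k} with a₀ ≠ 0 by z({a₀,…,a_k}) = Σ_{i=0}^{k} (−1)^i · w({0, a₀, …, a_k} ∖ {a_i}), and this cochain satisfies δz = 0. -/
section aux

variable {m : ℕ}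

lemma pos_erase {s : Finset (Fin m)} {a : Fin m} (b : Fin m) (ha : a ∈ s) :
    ((s.filter (fun x => x < b)).card) =
      (((s.erase a).filter (fun x => x < b)).card) + (if a < b then 1 else 0) := by
  rw [Finset.filter_erase]
  split_ifs with h
  · have hmem : a ∈ s.filter (fun x => x < b) := Finset.mem_filter.mpr ⟨ha, h⟩
    rw [Finset.card_erase_of_mem hmem]
    have : 0 < (s.filter (fun x => x < b)).card := Finset.card_pos.mpr ⟨a, hmem⟩
    omega
  · rw [Finset.erase_eq_of_notMem
      (show a ∉ s.filter (fun x => x < b) from fun hm => h (Finset.mem_filter.mp hm).2),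
      Nat.add_zero]

lemma pos_insert_zero {s : Finset (Fin (m + 1))} (h0 : (0 : Fin (m+1)) ∉ s) {a : Fin (m+1)}
    (ha : a ∈ s) :
    (((insert (0 : Fin (m+1)) s).filter (fun x => x < a)).card) =
      ((s.filter (fun x => x < a)).card) + 1 := by
  have hane : a ≠ 0 := fun h => h0 (h ▸ ha)
  have h0a : (0 : Fin (m+1)) < a := Fin.pos_iff_ne_zero.mpr hane
  rw [Finset.filter_insert, if_pos h0a,
    Finset.card_insert_of_notMem (fun hm => h0 (Finset.mem_filter.mp hm).1)]

lemma pos_zero {s : Finset (Fin (m + 1))} :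
    ((s.filter (fun x => x < (0 : Fin (m+1)))).card) = 0 := by
  simp [Finset.filter_eq_empty_iff]

lemma attach_sum_eq {α M : Type*} [AddCommMonoid M] (S : Finset α) (F : {x // x ∈ S} → M)
    (f : α → M) (h : ∀ a : {x // x ∈ S}, F a = f a.1) :
    ∑ a ∈ S.attach, F a = ∑ a ∈ S, f a := by
  rw [← Finset.sum_attach S f]
  exact Finset.sum_congr rfl fun a _ => h a

lemma sum_erase_eq_offDiag {M α : Type*} [AddCommMonoid M] [DecidableEq α] (s : Finset α)
    (f : α → α → M) :
    ∑ a ∈ s, ∑ b ∈ s.erase a, f a b = ∑ p ∈ s.offDiag, f p.1 p.2 := by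
  rw [show s.offDiag = (s ×ˢ s).filter (fun a => a.1 ≠ a.2) by ext; simp [and_assoc], Finset.sum_filter, Finset.sum_product]
  refine Finset.sum_congr rfl fun a ha => ?_
  rw [← Finset.sum_filter]
  congr 1
  ext b
  simp [Finset.mem_erase, ne_comm, eq_comm, and_comm]

end aux

lemma w_congr {n k : ℕ} {π : Type*} [AddCommGroup π]
    (w : {s : SimplexFace n k // (0 : Fin (n + 1)) ∈ s.1} → π)
    {s₁ s₂ : {s : SimplexFace n k // (0 : Fin (n + 1)) ∈ s.1}} (h : s₁.1.1 = s₂.1.1) :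
    w s₁ = w s₂ := by
  congr 1
  exact Subtype.ext (Subtype.ext h)

/-- Every `π`-valued function `w` on the `k`-faces of the standard `n`-simplex containing the
vertex `0` extends to a `k`-cocycle `z`, given on a face `{a₀ < ⋯ < a_k}` with `a₀ ≠ 0` by
`z s = Σ_i (-1)^i • w ({0, a₀, …, a_k} \\ {a_i})`. -/
theorem cocycle_extension (n k : ℕ) (hkn : k ≤ n) (π : Type*) [AddCommGroup π]
    (w : {s : SimplexFace n k // (0 : Fin (n + 1)) ∈ s.1} → π) :
    ∃ z : Cochain n k π, coboundary z = 0 ∧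
      (∀ s : {s : SimplexFace n k // (0 : Fin (n + 1)) ∈ s.1}, z s.1 = w s) ∧
      (∀ s : SimplexFace n k, ∀ h0 : (0 : Fin (n + 1)) ∉ s.1,
        z s = ∑ a ∈ s.1.attach,
          ((-1 : ℤ) ^ ((s.1.filter (fun x => x < a.1)).card)) •
            w ⟨⟨(insert (0 : Fin (n + 1)) s.1).erase a.1, by
                simp [Finset.card_erase_of_mem (Finset.mem_insert_of_mem a.2),
                  Finset.card_insert_of_notMem h0, s.2]⟩, by
              refine Finset.mem_erase.mpr ⟨?_, Finset.mem_insert_self _ _⟩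
              intro h
              exact h0 (by rw [h]; exact a.2)⟩) := by
  classical
  refine ⟨fun s =>
    if h : (0 : Fin (n+1)) ∈ s.1 then w ⟨s, h⟩
    else ∑ a ∈ s.1.attach,
      ((-1 : ℤ) ^ ((s.1.filter (fun x => x < a.1)).card)) •
        w ⟨⟨(insert (0 : Fin (n + 1)) s.1).erase a.1, by
            simp [Finset.card_erase_of_mem (Finset.mem_insert_of_mem a.2),
              Finset.card_insert_of_notMem h, s.2]⟩, by
          refine Finset.mem_erase.mpr ⟨?_, Finset.mem_insert_self _ _⟩
          intro hh
          exact h (by rw [hh]; exact a.2)⟩, ?_, ?_, ?_⟩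
  · set z : Cochain n k π := fun s =>
      if h : (0 : Fin (n+1)) ∈ s.1 then w ⟨s, h⟩
      else ∑ a ∈ s.1.attach,
        ((-1 : ℤ) ^ ((s.1.filter (fun x => x < a.1)).card)) •
          w ⟨⟨(insert (0 : Fin (n + 1)) s.1).erase a.1, by
              simp [Finset.card_erase_of_mem (Finset.mem_insert_of_mem a.2),
                Finset.card_insert_of_notMem h, s.2]⟩, by
            refine Finset.mem_erase.mpr ⟨?_, Finset.mem_insert_self _ _⟩
            intro hh
            exact h (by rw [hh]; exact a.2)⟩ with hzdef
    have hzmem : ∀ (s : SimplexFace n k) (h : (0 : Fin (n+1)) ∈ s.1), z s = w ⟨s, h⟩ :=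
      fun s h => dif_pos h
    have hzval : ∀ (s : SimplexFace n k) (h : (0 : Fin (n+1)) ∉ s.1),
        z s = ∑ a ∈ s.1, (if ha : a ∈ s.1 then
          ((-1 : ℤ) ^ ((s.1.filter (fun x => x < a)).card)) •
            w ⟨⟨(insert (0 : Fin (n + 1)) s.1).erase a, by
                simp [Finset.card_erase_of_mem (Finset.mem_insert_of_mem ha),
                  Finset.card_insert_of_notMem h, s.2]⟩, by
              refine Finset.mem_erase.mpr ⟨?_, Finset.mem_insert_self _ _⟩
              intro hh
              exact h (by rw [hh]; exact ha)⟩ else 0) := by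
      intro s h
      rw [show z s = _ from dif_neg h]
      exact attach_sum_eq _ _ _ (fun a => by rw [dif_pos a.2])
    have hcob : ∀ (t : SimplexFace n (k+1)),
        coboundary z t = ∑ a ∈ t.1, (if ha : a ∈ t.1 then
          ((-1 : ℤ) ^ ((t.1.filter (fun x => x < a)).card)) •
            z ⟨t.1.erase a, by simp [Finset.card_erase_of_mem ha, t.2]⟩ else 0) :=
      fun t => attach_sum_eq _ _ _ (fun a => by rw [dif_pos a.2])
    funext t
    rw [Pi.zero_apply, hcob t]
    by_cases h0 : (0 : Fin (n+1)) ∈ t.1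
    · -- case 0 ∈ t
      rw [← Finset.add_sum_erase _ _ h0, dif_pos h0, pos_zero, pow_zero, one_smul,
        hzval ⟨t.1.erase 0, by simp [Finset.card_erase_of_mem h0, t.2]⟩
          (Finset.notMem_erase _ _), ← Finset.sum_add_distrib]
      apply Finset.sum_eq_zero
      intro b hb
      have hbT : b ∈ t.1 := Finset.mem_of_mem_erase hb
      have hb0 : b ≠ 0 := Finset.ne_of_mem_erase hb
      rw [dif_pos hb, dif_pos hbT, hzmem ⟨t.1.erase b, by simp [Finset.card_erase_of_mem hbT, t.2]⟩ (Finset.mem_erase.mpr ⟨Ne.symm hb0, h0⟩)]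
      have hw : w ⟨⟨(insert (0 : Fin (n+1)) (t.1.erase 0)).erase b, by
            simp [Finset.card_erase_of_mem (Finset.mem_insert_of_mem hb),
              Finset.card_insert_of_notMem (Finset.notMem_erase _ _),
              Finset.card_erase_of_mem h0, t.2]⟩, by
          refine Finset.mem_erase.mpr ⟨Ne.symm hb0, Finset.mem_insert_self _ _⟩⟩ =
          w ⟨⟨t.1.erase b, by simp [Finset.card_erase_of_mem hbT, t.2]⟩,
            Finset.mem_erase.mpr ⟨Ne.symm hb0, h0⟩⟩ :=
        w_congr w (show (insert (0 : Fin (n+1)) (t.1.erase 0)).erase b = t.1.erase b by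
          rw [Finset.insert_erase h0])
      rw [hw]
      have hsign : ((t.1.filter (fun x => x < b)).card) =
          (((t.1.erase 0).filter (fun x => x < b)).card) + 1 := by
        have := pos_erase (a := (0 : Fin (n+1))) b h0
        rw [if_pos (Fin.pos_iff_ne_zero.mpr hb0)] at this
        exact this
      rw [hsign, pow_succ, mul_neg_one, neg_smul, add_neg_cancel]
    · -- case 0 ∉ t
      have hT0 : ((insert (0 : Fin (n+1)) t.1).card) = k + 3 := by
        rw [Finset.card_insert_of_notMem h0, t.2]
      set G : Fin (n+1) → Fin (n+1) → π := fun a b =>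
        if h : a ∈ t.1 ∧ b ∈ t.1 ∧ a ≠ b then
          (((-1 : ℤ) ^ ((t.1.filter (fun x => x < a)).card)) *
            ((-1 : ℤ) ^ (((t.1.erase a).filter (fun x => x < b)).card))) •
            w ⟨⟨((insert (0 : Fin (n+1)) t.1).erase a).erase b, by
                rw [Finset.card_erase_of_mem
                    (Finset.mem_erase.mpr ⟨Ne.symm h.2.2, Finset.mem_insert_of_mem h.2.1⟩),
                  Finset.card_erase_of_mem (Finset.mem_insert_of_mem h.1), hT0]; omega⟩, by
              refine Finset.mem_erase.mpr ⟨fun hh => h0 (hh ▸ h.2.1), ?_⟩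
              exact Finset.mem_erase.mpr ⟨fun hh => h0 (hh ▸ h.1), Finset.mem_insert_self _ _⟩⟩
        else 0 with hGdef
      have step : ∀ a ∈ t.1, (if ha : a ∈ t.1 then
          ((-1 : ℤ) ^ ((t.1.filter (fun x => x < a)).card)) •
            z ⟨t.1.erase a, by simp [Finset.card_erase_of_mem ha, t.2]⟩ else 0) =
          ∑ b ∈ t.1.erase a, G a b := by
        intro a ha
        have h0a : (0 : Fin (n+1)) ∉ t.1.erase a := fun hh => h0 (Finset.mem_of_mem_erase hh)
        rw [dif_pos ha, hzval ⟨t.1.erase a, by simp [Finset.card_erase_of_mem ha, t.2]⟩ h0a,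
          Finset.smul_sum]
        refine Finset.sum_congr rfl fun b hb => ?_
        have hba : b ≠ a := Finset.ne_of_mem_erase hb
        have hab : a ≠ b := Ne.symm hba
        have hbT : b ∈ t.1 := Finset.mem_of_mem_erase hb
        have h0ne : (0 : Fin (n+1)) ≠ a := fun hh => h0 (hh ▸ ha)
        rw [dif_pos hb, hGdef]
        simp only []
        rw [dif_pos ⟨ha, hbT, hab⟩, smul_smul]
        congr 1
        exact w_congr w (show (insert (0 : Fin (n+1)) (t.1.erase a)).erase b =
          ((insert (0 : Fin (n+1)) t.1).erase a).erase b by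
          rw [Finset.erase_insert_of_ne h0ne])
      rw [Finset.sum_congr rfl step, sum_erase_eq_offDiag]
      refine Finset.sum_involution (fun p _ => p.swap) ?_ ?_ ?_ ?_
      · intro p hp
        obtain ⟨ha, hb, hne⟩ := Finset.mem_offDiag.mp hp
        simp only [hGdef, Prod.fst_swap, Prod.snd_swap]
        rw [dif_pos ⟨ha, hb, hne⟩, dif_pos ⟨hb, ha, Ne.symm hne⟩]
        have hw : w ⟨⟨((insert (0 : Fin (n+1)) t.1).erase p.2).erase p.1, by
              rw [Finset.card_erase_of_mem
                  (Finset.mem_erase.mpr ⟨hne, Finset.mem_insert_of_mem ha⟩),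
                Finset.card_erase_of_mem (Finset.mem_insert_of_mem hb), hT0]; omega⟩, by
            refine Finset.mem_erase.mpr ⟨fun hh => h0 (hh ▸ ha), ?_⟩
            exact Finset.mem_erase.mpr ⟨fun hh => h0 (hh ▸ hb), Finset.mem_insert_self _ _⟩⟩ =
            w ⟨⟨((insert (0 : Fin (n+1)) t.1).erase p.1).erase p.2, by
              rw [Finset.card_erase_of_mem
                  (Finset.mem_erase.mpr ⟨Ne.symm hne, Finset.mem_insert_of_mem hb⟩),
                Finset.card_erase_of_mem (Finset.mem_insert_of_mem ha), hT0]; omega⟩, by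
            refine Finset.mem_erase.mpr ⟨fun hh => h0 (hh ▸ hb), ?_⟩
            exact Finset.mem_erase.mpr ⟨fun hh => h0 (hh ▸ ha), Finset.mem_insert_self _ _⟩⟩ :=
          w_congr w (show ((insert (0 : Fin (n+1)) t.1).erase p.2).erase p.1 =
            ((insert (0 : Fin (n+1)) t.1).erase p.1).erase p.2 from Finset.erase_right_comm)
        rw [hw, ← add_smul]
        convert zero_smul ℤ _
        have e1 := pos_erase (a := p.1) p.2 ha
        have e2 := pos_erase (a := p.2) p.1 hb
        rcases lt_or_gt_of_ne hne with h | h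
        · rw [if_pos h] at e1
          rw [if_neg (asymm h)] at e2
          rw [e1, e2]
          ring
        · rw [if_neg (asymm h)] at e1
          rw [if_pos h] at e2
          rw [e1, e2]
          ring
      · intro p hp _
        obtain ⟨_, _, hne⟩ := Finset.mem_offDiag.mp hp
        intro hc
        exact hne ((Prod.ext_iff.mp hc).2 ▸ rfl)
      · intro p hp
        obtain ⟨ha, hb, hne⟩ := Finset.mem_offDiag.mp hp
        exact Finset.mem_offDiag.mpr ⟨hb, ha, Ne.symm hne⟩
      · intro p hp
        rfl
  · intro s
    simp only [dif_pos s.2]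
  · intro s h0
    simp only [dif_neg h0]
end

section
/- Let π be an abelian group and let k ≤ n be natural numbers. If two π-valued k-cocycles on Δⁿ agree on every k-face containing the vertex 0, then they are equal. -/
lemma coboundary_insert_zero {n k : ℕ} {π : Type*} [AddCommGroup π] (z : Cochain n k π)
    (s : SimplexFace n k) (h0 : (0 : Fin (n + 1)) ∉ s.1)
    (ht : (insert (0 : Fin (n + 1)) s.1).card = (k + 1) + 1) :
    coboundary z ⟨insert 0 s.1, ht⟩ =
      z s + ∑ a ∈ s.1.attach,
        ((-1 : ℤ) ^ (((insert (0 : Fin (n + 1)) s.1).filter (fun x => x < a.1)).card)) •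
          z ⟨(insert (0 : Fin (n + 1)) s.1).erase a.1, by
            simp [Finset.card_erase_of_mem (Finset.mem_insert_of_mem a.2), ht]⟩ := by
  unfold coboundary
  simp only
  rw [Finset.attach_insert, Finset.sum_insert (by
    simp only [Finset.mem_image, not_exists]
    intro x hx
    apply h0
    have := congrArg Subtype.val hx.2
    simp at this
    rw [← this]; exact x.2)]
  congr 1
  · have hf : (insert (0 : Fin (n + 1)) s.1).filter (fun x => x < 0) = ∅ := by
      ext x; simp
    rw [hf]
    simp only [Finset.card_empty, pow_zero, one_smul]
    congr 1
    exact Subtype.ext (Finset.erase_insert h0)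
  · rw [Finset.sum_image (by intro x _ y _ hxy; exact Subtype.ext (by simpa using congrArg Subtype.val hxy))]

/-- Two `π`-valued `k`-cocycles on the standard `n`-simplex that agree on every `k`-face
containing the vertex `0` are equal. -/
theorem cocycle_ext_of_agree_on_zero_faces (n k : ℕ) (hkn : k ≤ n)
    (π : Type*) [AddCommGroup π] (z₁ z₂ : Cochain n k π)
    (h₁ : coboundary z₁ = 0) (h₂ : coboundary z₂ = 0)
    (h : ∀ s : SimplexFace n k, (0 : Fin (n + 1)) ∈ s.1 → z₁ s = z₂ s) :
    z₁ = z₂ := by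
  funext s
  by_cases h0 : (0 : Fin (n + 1)) ∈ s.1
  · exact h s h0
  · have ht : (insert (0 : Fin (n + 1)) s.1).card = (k + 1) + 1 := by
      rw [Finset.card_insert_of_notMem h0, s.2]
    have e1 := congrFun h₁ ⟨insert 0 s.1, ht⟩
    have e2 := congrFun h₂ ⟨insert 0 s.1, ht⟩
    rw [coboundary_insert_zero z₁ s h0 ht] at e1
    rw [coboundary_insert_zero z₂ s h0 ht] at e2
    have hsum : ∀ a : {x // x ∈ s.1},
        z₁ ⟨(insert (0 : Fin (n + 1)) s.1).erase a.1, by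
          simp [Finset.card_erase_of_mem (Finset.mem_insert_of_mem a.2), ht]⟩ =
        z₂ ⟨(insert (0 : Fin (n + 1)) s.1).erase a.1, by
          simp [Finset.card_erase_of_mem (Finset.mem_insert_of_mem a.2), ht]⟩ := by
      intro a
      apply h
      apply Finset.mem_erase_of_ne_of_mem
      · intro hc; exact h0 (hc ▸ a.2)
      · exact Finset.mem_insert_self _ _
    have : (z₁ s + ∑ a ∈ s.1.attach,
        ((-1 : ℤ) ^ (((insert (0 : Fin (n + 1)) s.1).filter (fun x => x < a.1)).card)) •
          z₁ ⟨(insert (0 : Fin (n + 1)) s.1).erase a.1, by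
            simp [Finset.card_erase_of_mem (Finset.mem_insert_of_mem a.2), ht]⟩) =
        (z₂ s + ∑ a ∈ s.1.attach,
        ((-1 : ℤ) ^ (((insert (0 : Fin (n + 1)) s.1).filter (fun x => x < a.1)).card)) •
          z₂ ⟨(insert (0 : Fin (n + 1)) s.1).erase a.1, by
            simp [Finset.card_erase_of_mem (Finset.mem_insert_of_mem a.2), ht]⟩) := by
      rw [e1, e2]
    have hS : (∑ a ∈ s.1.attach,
        ((-1 : ℤ) ^ (((insert (0 : Fin (n + 1)) s.1).filter (fun x => x < a.1)).card)) •
          z₁ ⟨(insert (0 : Fin (n + 1)) s.1).erase a.1, by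
            simp [Finset.card_erase_of_mem (Finset.mem_insert_of_mem a.2), ht]⟩) =
        ∑ a ∈ s.1.attach,
        ((-1 : ℤ) ^ (((insert (0 : Fin (n + 1)) s.1).filter (fun x => x < a.1)).card)) •
          z₂ ⟨(insert (0 : Fin (n + 1)) s.1).erase a.1, by
            simp [Finset.card_erase_of_mem (Finset.mem_insert_of_mem a.2), ht]⟩ :=
      Finset.sum_congr rfl (fun a _ => by rw [hsum a])
    rw [hS] at this
    exact add_right_cancel this
end

section
/- Let π be an abelian group and let k, n be natural numbers with k + 1 ≤ n. Then every π-valued (k+1)-cocycle on Δⁿ is the coboundary of some π-valued k-cochain on Δⁿ; that is, the coboundary map δ from k-cochains to (k+1)-cochains has image exactly the set of (k+1)-cocycles. -/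
namespace CoboundaryAux
variable {n : ℕ} {π : Type*} [AddCommGroup π]

def ZF (j : ℕ) (z : Cochain n j π) (s : Finset (Fin (n + 1))) : π :=
  if h : s.card = j + 1 then z ⟨s, h⟩ else 0

lemma ZF_eq (j : ℕ) (z : Cochain n j π) (s : Finset (Fin (n + 1))) (h : s.card = j + 1) :
    ZF j z s = z ⟨s, h⟩ := dif_pos h

lemma coboundary_apply (j : ℕ) (z : Cochain n j π) (t : SimplexFace n (j + 1)) :
    coboundary z t
      = ∑ a ∈ t.1, ((-1 : ℤ) ^ ((t.1.filter (fun x => x < a)).card)) • ZF j z (t.1.erase a) := by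
  unfold coboundary
  rw [← Finset.sum_attach t.1
    (fun a => ((-1 : ℤ) ^ ((t.1.filter (fun x => x < a)).card)) • ZF j z (t.1.erase a))]
  refine Finset.sum_congr rfl fun a _ => ?_
  congr 1
  rw [ZF_eq]

lemma filter_lt_zero (s : Finset (Fin (n + 1))) :
    s.filter (fun x => x < (0 : Fin (n + 1))) = ∅ := by
  simp only [Finset.filter_eq_empty_iff]
  intro x _
  exact (Fin.not_lt_zero x : ¬ x < 0)

lemma zf_of_z (k : ℕ) (w : Cochain n (k + 1) π) (s : Finset (Fin (n + 1)))
    (hc : s.card = k + 1) (h0 : (0 : Fin (n + 1)) ∉ s) :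
    ZF k (fun s : SimplexFace n k => if (0 : Fin (n + 1)) ∈ s.1 then 0
        else ZF (k + 1) w (insert 0 s.1)) s
      = ZF (k + 1) w (insert 0 s) := by
  rw [ZF_eq _ _ _ hc]
  exact if_neg h0

/-- position of `b` in `s.erase a` -/
lemma card_filter_erase (s : Finset (Fin (n + 1))) (a b : Fin (n + 1)) (ha : a ∈ s) :
    ((s.erase a).filter (fun x => x < b)).card =
      if a < b then (s.filter (fun x => x < b)).card - 1
      else (s.filter (fun x => x < b)).card := by
  rw [Finset.filter_erase]
  split
  · exact Finset.card_erase_of_mem (Finset.mem_filter.2 ⟨ha, ‹a < b›⟩)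
  · rw [Finset.erase_eq_of_notMem]
    simp only [Finset.mem_filter]
    tauto

lemma sign_cancel {pa pb : ℕ} (hpb : 1 ≤ pb) (x : π) :
    ((-1 : ℤ) ^ pa * (-1 : ℤ) ^ (pb - 1)) • x + ((-1 : ℤ) ^ pb * (-1 : ℤ) ^ pa) • x = 0 := by
  obtain ⟨m, rfl⟩ := Nat.exists_eq_add_of_le hpb
  rw [add_comm 1 m]
  simp only [Nat.add_sub_cancel]
  rw [← add_smul]
  have : (-1 : ℤ) ^ pa * (-1 : ℤ) ^ m + (-1 : ℤ) ^ (m + 1) * (-1 : ℤ) ^ pa = 0 := by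
    rw [pow_succ]; ring
  rw [this, zero_smul]

lemma coboundary_coboundary (j : ℕ) (z : Cochain n j π) :
    coboundary (coboundary z) = 0 := by
  funext u
  rw [coboundary_apply]
  have key : ∀ a ∈ u.1, ZF (j + 1) (coboundary z) (u.1.erase a)
      = ∑ b ∈ u.1.erase a,
          ((-1 : ℤ) ^ (((u.1.erase a).filter (fun x => x < b)).card)) •
            ZF j z ((u.1.erase a).erase b) := by
    intro a ha
    have hc : (u.1.erase a).card = (j + 1) + 1 := by
      simp [Finset.card_erase_of_mem ha, u.2]
    rw [ZF_eq _ _ _ hc]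
    exact coboundary_apply j z ⟨u.1.erase a, hc⟩
  rw [Finset.sum_congr rfl fun a ha => by rw [key a ha, Finset.smul_sum]]
  simp only [smul_smul]
  rw [Finset.sum_sigma' u.1 (fun a => u.1.erase a)]
  show ∑ p ∈ _, (fun p : (_ : Fin (n+1)) × Fin (n+1) =>
    ((-1 : ℤ) ^ ((u.1.filter (fun x => x < p.1)).card) *
      (-1 : ℤ) ^ (((u.1.erase p.1).filter (fun x => x < p.2)).card)) •
      ZF j z ((u.1.erase p.1).erase p.2)) p = (0 : Cochain n (j+1+1) π) u
  refine Finset.sum_involution (fun p _ => ⟨p.2, p.1⟩) ?_ ?_ ?_ ?_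
  · rintro ⟨a, b⟩ hp
    simp only [Finset.mem_sigma, Finset.mem_erase] at hp
    obtain ⟨ha, hba, hb⟩ := hp
    have hee : (u.1.erase a).erase b = (u.1.erase b).erase a := Finset.erase_right_comm
    rcases lt_or_gt_of_ne hba.symm with hab | hab
    · -- a < b
      have h1 : ((u.1.erase a).filter (fun x => x < b)).card
          = (u.1.filter (fun x => x < b)).card - 1 := by
        rw [card_filter_erase u.1 a b ha, if_pos hab]
      have h2 : ((u.1.erase b).filter (fun x => x < a)).card
          = (u.1.filter (fun x => x < a)).card := by
        rw [card_filter_erase u.1 b a hb, if_neg (asymm hab)]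
      have hge : 1 ≤ (u.1.filter (fun x => x < b)).card :=
        Finset.card_pos.2 ⟨a, Finset.mem_filter.2 ⟨ha, hab⟩⟩ 
      simp only [h1, h2, hee]
      exact sign_cancel hge _
    · -- b < a
      have h1 : ((u.1.erase a).filter (fun x => x < b)).card
          = (u.1.filter (fun x => x < b)).card := by
        rw [card_filter_erase u.1 a b ha, if_neg (asymm hab)]
      have h2 : ((u.1.erase b).filter (fun x => x < a)).card
          = (u.1.filter (fun x => x < a)).card - 1 := by
        rw [card_filter_erase u.1 b a hb, if_pos hab]
      have hge : 1 ≤ (u.1.filter (fun x => x < a)).card :=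
        Finset.card_pos.2 ⟨b, Finset.mem_filter.2 ⟨hb, hab⟩⟩
      simp only [h1, h2, hee]
      rw [add_comm]
      exact sign_cancel hge _
  · rintro ⟨a, b⟩ hp _
    simp only [Finset.mem_sigma, Finset.mem_erase] at hp
    exact fun h => hp.2.1 (congrArg Sigma.fst h)
  · rintro ⟨a, b⟩ hp
    simp only [Finset.mem_sigma, Finset.mem_erase] at hp ⊢
    exact ⟨hp.2.2, hp.2.1.symm, hp.1⟩
  · rintro ⟨a, b⟩ _
    rfl

theorem range_coboundary' (n k : ℕ) (π : Type*) [AddCommGroup π] :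
    Set.range (coboundary : Cochain n k π → Cochain n (k + 1) π) =
      {w : Cochain n (k + 1) π | coboundary w = 0} := by
  ext w
  simp only [Set.mem_range, Set.mem_setOf_eq]
  constructor
  · rintro ⟨z, rfl⟩
    exact coboundary_coboundary k z
  · intro hw
    classical
    set z : Cochain n k π := fun s => if (0 : Fin (n + 1)) ∈ s.1 then 0
      else ZF (k + 1) w (insert 0 s.1) with hz
    refine ⟨z, ?_⟩
    funext t
    rw [coboundary_apply]
    by_cases h0 : (0 : Fin (n + 1)) ∈ t.1
    · rw [Finset.sum_eq_single (0 : Fin (n + 1))]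
      · rw [filter_lt_zero, Finset.card_empty, pow_zero, one_smul]
        have hc : (t.1.erase 0).card = k + 1 := by
          simp [Finset.card_erase_of_mem h0, t.2]
        rw [zf_of_z k w _ hc (Finset.notMem_erase _ _), Finset.insert_erase h0,
          ZF_eq _ _ _ t.2]
        exact congrArg w (Subtype.ext rfl)
      · intro b hb hb0
        have hc : (t.1.erase b).card = k + 1 := by
          simp [Finset.card_erase_of_mem hb, t.2]
        rw [ZF_eq _ _ _ hc, hz]
        simp only
        rw [if_pos (Finset.mem_erase.2 ⟨fun h => hb0 h.symm, h0⟩), smul_zero]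
      · intro h
        exact absurd h0 h
    · have hu : (insert (0 : Fin (n + 1)) t.1).card = (k + 1) + 1 + 1 := by
        rw [Finset.card_insert_of_notMem h0, t.2]
      have h := (coboundary_apply (k + 1) w ⟨insert (0 : Fin (n + 1)) t.1, hu⟩).symm.trans
        (congrFun hw ⟨insert (0 : Fin (n + 1)) t.1, hu⟩)
      change _ = (0 : π) at h
      dsimp only at h
      rw [Finset.sum_insert h0] at h
      rw [filter_lt_zero, Finset.card_empty, pow_zero, one_smul,
        Finset.erase_insert h0, ZF_eq _ _ _ t.2] at h
      have hrest : ∑ a ∈ t.1,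
          ((-1 : ℤ) ^ (((insert (0 : Fin (n+1)) t.1).filter (fun x => x < a)).card)) •
            ZF (k + 1) w ((insert (0 : Fin (n+1)) t.1).erase a)
          = - ∑ a ∈ t.1, ((-1 : ℤ) ^ ((t.1.filter (fun x => x < a)).card)) •
              ZF k z (t.1.erase a) := by
        rw [← Finset.sum_neg_distrib]
        refine Finset.sum_congr rfl fun a ha => ?_
        have ha0 : a ≠ 0 := fun h => h0 (h ▸ ha)
        have h0a : (0 : Fin (n + 1)) < a := Fin.pos_iff_ne_zero.2 ha0
        have hfil : (insert (0 : Fin (n+1)) t.1).filter (fun x => x < a)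
            = insert (0 : Fin (n+1)) (t.1.filter (fun x => x < a)) := by
          rw [Finset.filter_insert, if_pos h0a]
        have h0f : (0 : Fin (n+1)) ∉ t.1.filter (fun x => x < a) := fun h =>
          h0 (Finset.mem_filter.1 h).1
        have hcard : ((insert (0 : Fin (n+1)) t.1).filter (fun x => x < a)).card
            = (t.1.filter (fun x => x < a)).card + 1 := by
          rw [hfil, Finset.card_insert_of_notMem h0f]
        have her : (insert (0 : Fin (n+1)) t.1).erase a
            = insert (0 : Fin (n+1)) (t.1.erase a) :=
          Finset.erase_insert_of_ne ha0.symm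
        have hc : (t.1.erase a).card = k + 1 := by
          simp [Finset.card_erase_of_mem ha, t.2]
        rw [hcard, her, ← zf_of_z k w _ hc (fun h => h0 (Finset.mem_of_mem_erase h)),
          pow_succ, mul_comm, neg_one_mul, neg_smul]
      rw [hrest, add_neg_eq_zero] at h
      exact h.symm

end CoboundaryAux

/-- For `k + 1 ≤ n`, the coboundary map from `π`-valued `k`-cochains to `(k+1)`-cochains on the
standard `n`-simplex has image exactly the set of `(k+1)`-cocycles. -/
theorem range_coboundary (n k : ℕ) (hkn : k + 1 ≤ n) (π : Type*) [AddCommGroup π] :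
    Set.range (coboundary : Cochain n k π → Cochain n (k + 1) π) =
      {w : Cochain n (k + 1) π | coboundary w = 0} :=
  CoboundaryAux.range_coboundary' n k π
end

section
/- Let π be a finite abelian group and let k ≤ n be natural numbers. For every (k+1)-cochain w on Δⁿ that lies in the image of the coboundary map δ, the number of k-cochains z on Δⁿ with δz = w equals the number of k-cocycles on Δⁿ, namely |π|^(n choose k). (Each nonempty fiber of δ is a coset of the group of k-cocycles.) -/
namespace Simpx

variable {n k m : ℕ} {π : Type*} [AddCommGroup π]

lemma filter_lt_erase_lt {t : Finset (Fin (n+1))} {a b : Fin (n+1)} (hab : a < b) (ha : a ∈ t) :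
    ((t.erase a).filter (fun x => x < b)).card + 1 = (t.filter (fun x => x < b)).card := by
  rw [Finset.filter_erase]
  exact Finset.card_erase_add_one (Finset.mem_filter.2 ⟨ha, hab⟩)

lemma filter_lt_erase_ge {t : Finset (Fin (n+1))} {a b : Fin (n+1)} (hab : ¬ a < b) :
    (t.erase a).filter (fun x => x < b) = t.filter (fun x => x < b) := by
  rw [Finset.filter_erase, Finset.erase_eq_of_notMem]
  simp [hab]

section antisym
variable {α M : Type*} [AddCommGroup M]

lemma sum_sum_antisymm (s : Finset α) (F : α → α → M)
    (hd : ∀ a, F a a = 0) (ha : ∀ a b, F a b + F b a = 0) :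
    ∑ a ∈ s, ∑ b ∈ s, F a b = 0 := by
  rw [← Finset.sum_product']
  refine Finset.sum_involution (fun p _ => (p.2, p.1)) ?_ ?_ ?_ ?_
  · exact fun p _ => ha p.1 p.2
  · rintro ⟨a, b⟩ h hne heq
    rw [Prod.ext_iff] at heq
    obtain ⟨h1, -⟩ := heq
    apply hne
    rw [show b = a from h1]
    exact hd a
  · rintro ⟨a, b⟩ hp
    rw [Finset.mem_product] at *
    exact ⟨hp.2, hp.1⟩
  · intros; rfl
end antisym

/-- summand of the coboundary, as a non-dependent function. -/
def D (z : Cochain n k π) (t : Finset (Fin (n+1))) (ht : t.card = k + 2) (a : Fin (n+1)) : π :=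
  if h : a ∈ t then
    ((-1 : ℤ) ^ ((t.filter (fun x => x < a)).card)) •
      z ⟨t.erase a, by rw [Finset.card_erase_of_mem h, ht]; omega⟩
  else 0

lemma coboundary_apply (z : Cochain n k π) (t : Finset (Fin (n+1))) (ht : t.card = k + 2)
    (ht' : t.card = (k + 1) + 1) :
    coboundary z ⟨t, ht'⟩ = ∑ a ∈ t, D z t ht a := by
  rw [← Finset.sum_attach t (D z t ht)]
  refine Finset.sum_congr rfl fun a _ => ?_
  rw [D, dif_pos a.2]

/-- summand of the double coboundary. -/
def F (z : Cochain n k π) (t : Finset (Fin (n+1))) (ht : t.card = k + 3) (a b : Fin (n+1)) : π :=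
  if h : a ∈ t then
    ((-1 : ℤ) ^ ((t.filter (fun x => x < a)).card)) •
      D z (t.erase a) (by rw [Finset.card_erase_of_mem h, ht]; omega) b
  else 0

lemma F_diag (z : Cochain n k π) (t : Finset (Fin (n+1))) (ht : t.card = k + 3) (a : Fin (n+1)) :
    F z t ht a a = 0 := by
  rw [F]
  split
  · rw [D, dif_neg (Finset.notMem_erase a t), smul_zero]
  · rfl

lemma F_antisymm_lt (z : Cochain n k π) (t : Finset (Fin (n+1))) (ht : t.card = k + 3)
    {a b : Fin (n+1)} (hab : a < b) (hat : a ∈ t) (hbt : b ∈ t) :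
    F z t ht a b + F z t ht b a = 0 := by
  have hba : b ∈ t.erase a := Finset.mem_erase.2 ⟨hab.ne', hbt⟩
  have hab' : a ∈ t.erase b := Finset.mem_erase.2 ⟨hab.ne, hat⟩
  rw [F, F, dif_pos hat, dif_pos hbt, D, D, dif_pos hba, dif_pos hab']
  have hface : ((t.erase b).erase a : Finset (Fin (n+1))) = (t.erase a).erase b :=
    Finset.erase_right_comm
  have hz : z ⟨(t.erase b).erase a, by
        rw [Finset.card_erase_of_mem hab', Finset.card_erase_of_mem hbt, ht]; omega⟩ =
      z ⟨(t.erase a).erase b, by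
        rw [Finset.card_erase_of_mem hba, Finset.card_erase_of_mem hat, ht]; omega⟩ := by
    congr 1
    exact Subtype.ext hface
  rw [hz, smul_smul, smul_smul, ← add_smul]
  convert zero_smul ℤ _
  rw [← filter_lt_erase_lt hab hat, filter_lt_erase_ge (asymm hab)]
  ring

lemma F_antisymm (z : Cochain n k π) (t : Finset (Fin (n+1))) (ht : t.card = k + 3)
    (a b : Fin (n+1)) : F z t ht a b + F z t ht b a = 0 := by
  rcases Decidable.em (a ∈ t) with hat | hat
  · rcases Decidable.em (b ∈ t) with hbt | hbt
    · rcases lt_trichotomy a b with hab | rfl | hba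
      · exact F_antisymm_lt z t ht hab hat hbt
      · rw [F_diag, add_zero]
      · rw [add_comm]; exact F_antisymm_lt z t ht hba hbt hat
    · rw [F, F, dif_pos hat, dif_neg hbt, D,
        dif_neg (fun hb => hbt (Finset.mem_of_mem_erase hb)), smul_zero, add_zero]
  · rw [F, F, dif_neg hat, zero_add]
    split
    · rw [D, dif_neg (fun hb => hat (Finset.mem_of_mem_erase hb)), smul_zero]
    · rfl

lemma coboundary_coboundary (z : Cochain n k π) : coboundary (coboundary z) = 0 := by
  funext t
  obtain ⟨t, ht⟩ := t
  have ht3 : t.card = k + 3 := by omega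
  rw [coboundary_apply (coboundary z) t (by omega) ht]
  show _ = (0 : π)
  have step : ∀ a ∈ t, D (coboundary z) t (by omega) a = ∑ b ∈ t, F z t ht3 a b := by
    intro a hat
    rw [D, dif_pos hat,
      coboundary_apply z (t.erase a) (by rw [Finset.card_erase_of_mem hat, ht3]; omega),
      Finset.smul_sum]
    rw [Finset.sum_erase t (f := fun b => ((-1 : ℤ) ^ ((t.filter (fun x => x < a)).card)) •
        D z (t.erase a) (by rw [Finset.card_erase_of_mem hat, ht3]; omega) b)
      (by simp [D, Finset.notMem_erase])]
    exact Finset.sum_congr rfl fun b _ => by rw [F, dif_pos hat]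
  rw [Finset.sum_congr rfl step]
  exact sum_sum_antisymm t _ (F_diag z t ht3) (F_antisymm z t ht3)

/-- The cone operator (contracting homotopy) based at vertex `0`. -/
def cone (w : Cochain n (m+1) π) : Cochain n m π := fun s =>
  if h : (0 : Fin (n+1)) ∈ s.1 then 0
  else w ⟨insert 0 s.1, by rw [Finset.card_insert_of_notMem h, s.2]⟩

lemma cone_zero : cone (0 : Cochain n (m+1) π) = 0 := by
  funext s
  rw [cone]
  split <;> rfl

lemma coboundary_insert (z : Cochain n k π) (s : Finset (Fin (n+1))) (hs : s.card = k+1)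
    (h0 : (0:Fin (n+1)) ∉ s) (hins : (insert 0 s).card = (k+1)+1)
    (hins2 : (insert 0 s).card = k+2) :
    coboundary z ⟨insert 0 s, hins⟩ = z ⟨s, hs⟩ + ∑ a ∈ s, D z (insert 0 s) hins2 a := by
  rw [coboundary_apply z (insert 0 s) hins2 hins, Finset.sum_insert h0]
  congr 1
  rw [D, dif_pos (Finset.mem_insert_self 0 s)]
  have h1 : (insert 0 s).filter (fun x => x < 0) = ∅ :=
    Finset.filter_false_of_mem (fun x _ => Fin.not_lt_zero x)
  rw [h1]
  simp only [Finset.card_empty, pow_zero, one_smul]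
  congr 1
  exact Subtype.ext (Finset.erase_insert h0)

lemma D_insert (z : Cochain n k π) {s : Finset (Fin (n+1))} (hs : s.card = k+1)
    (h0 : (0:Fin (n+1)) ∉ s) (hins2 : (insert 0 s).card = k+2) {a : Fin (n+1)} (ha : a ∈ s) :
    D z (insert 0 s) hins2 a =
      -(((-1:ℤ) ^ ((s.filter (fun x => x < a)).card)) •
        z ⟨insert 0 (s.erase a), by
          rw [Finset.card_insert_of_notMem (fun h => h0 (Finset.mem_of_mem_erase h)),
            Finset.card_erase_of_mem ha, hs]; omega⟩) := by
  have hane : a ≠ 0 := fun h => h0 (h ▸ ha)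
  rw [D, dif_pos (Finset.mem_insert_of_mem ha)]
  have hfil : (insert 0 s).filter (fun x => x < a) = insert 0 (s.filter (fun x => x < a)) := by
    rw [Finset.filter_insert, if_pos (Fin.pos_of_ne_zero hane)]
  have hcard : ((insert 0 s).filter (fun x => x < a)).card
      = (s.filter (fun x => x < a)).card + 1 := by
    rw [hfil, Finset.card_insert_of_notMem (fun h => h0 (Finset.mem_of_mem_filter 0 h))]
  rw [hcard, pow_succ, mul_neg_one, neg_smul]
  have hz : z ⟨(insert 0 s).erase a, by
        rw [Finset.card_erase_of_mem (Finset.mem_insert_of_mem ha), hins2]; omega⟩ =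
      z ⟨insert 0 (s.erase a), by
        rw [Finset.card_insert_of_notMem (fun h => h0 (Finset.mem_of_mem_erase h)),
          Finset.card_erase_of_mem ha, hs]; omega⟩ := by
    congr 1
    exact Subtype.ext (Finset.erase_insert_of_ne (Ne.symm hane))
  rw [hz]

lemma homotopy (w : Cochain n (m+1) π) :
    coboundary (cone w) + cone (coboundary w) = w := by
  funext s
  obtain ⟨s, hs⟩ := s
  show coboundary (cone w) ⟨s, hs⟩ + cone (coboundary w) ⟨s, hs⟩ = w ⟨s, hs⟩
  by_cases h0 : (0 : Fin (n+1)) ∈ s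
  · have h2 : cone (coboundary w) ⟨s, hs⟩ = 0 := dif_pos h0
    rw [h2, add_zero, coboundary_apply (cone w) s (by omega) hs]
    rw [Finset.sum_eq_single_of_mem 0 h0 ?side]
    case side =>
      intro b hb hbne
      rw [D, dif_pos hb]
      have : (0 : Fin (n+1)) ∈ s.erase b := Finset.mem_erase.2 ⟨Ne.symm hbne, h0⟩
      rw [show cone w ⟨s.erase b, by rw [Finset.card_erase_of_mem hb, hs]; omega⟩ = 0 from dif_pos this,
        smul_zero]
    rw [D, dif_pos h0]
    have h1 : s.filter (fun x => x < 0) = ∅ :=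
      Finset.filter_false_of_mem (fun x _ => Fin.not_lt_zero x)
    rw [h1]
    simp only [Finset.card_empty, pow_zero, one_smul]
    rw [show cone w ⟨s.erase 0, by rw [Finset.card_erase_of_mem h0, hs]; omega⟩
        = w ⟨insert 0 (s.erase 0), by
            rw [Finset.card_insert_of_notMem (Finset.notMem_erase 0 s),
              Finset.card_erase_of_mem h0, hs]; omega⟩ from dif_neg (Finset.notMem_erase 0 s)]
    congr 1
    exact Subtype.ext (Finset.insert_erase h0)
  · have hins2 : (insert 0 s).card = (m+1)+2 := by
      rw [Finset.card_insert_of_notMem h0, hs]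
    have h2 : cone (coboundary w) ⟨s, hs⟩ = coboundary w ⟨insert 0 s, by
        rw [Finset.card_insert_of_notMem h0, hs]⟩ := dif_neg h0
    rw [h2, coboundary_insert w s hs h0 _ hins2, coboundary_apply (cone w) s (by omega) hs]
    have hterm : ∀ a ∈ s, D (cone w) s (by omega) a = -(D w (insert 0 s) hins2 a) := by
      intro a ha
      rw [D_insert w hs h0 hins2 ha, neg_neg, D, dif_pos ha]
      congr 1
      exact dif_neg (fun h => h0 (Finset.mem_of_mem_erase h))
    rw [Finset.sum_congr rfl hterm, Finset.sum_neg_distrib]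
    abel

lemma coboundary_sub (z z' : Cochain n k π) :
    coboundary (z - z') = coboundary z - coboundary z' := by
  funext t
  simp only [coboundary]
  exact (Finset.sum_congr rfl fun a _ => smul_sub _ _ _).trans (Finset.sum_sub_distrib _ _)

lemma coboundary_add (z z' : Cochain n k π) :
    coboundary (z + z') = coboundary z + coboundary z' := by
  funext t
  simp only [coboundary]
  exact (Finset.sum_congr rfl fun a _ => smul_add _ _ _).trans Finset.sum_add_distrib

lemma cocycle_eq_of_restr_eq (z₁ z₂ : Cochain n k π) (h1 : coboundary z₁ = 0)
    (h2 : coboundary z₂ = 0)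
    (h : ∀ (s : SimplexFace n k), (0:Fin (n+1)) ∈ s.1 → z₁ s = z₂ s) : z₁ = z₂ := by
  have hd : coboundary (z₁ - z₂) = 0 := by rw [coboundary_sub, h1, h2, sub_zero]
  have key : ∀ (s : SimplexFace n k), (z₁ - z₂) s = 0 := by
    rintro ⟨s, hs⟩
    by_cases h0 : (0:Fin (n+1)) ∈ s
    · have := h ⟨s, hs⟩ h0
      show z₁ ⟨s, hs⟩ - z₂ ⟨s, hs⟩ = 0
      rw [this, sub_self]
    · have hins : (insert 0 s).card = (k+1)+1 := by
        rw [Finset.card_insert_of_notMem h0, hs]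
      have hins2 : (insert 0 s).card = k+2 := by omega
      have e1 : coboundary (z₁ - z₂) ⟨insert 0 s, hins⟩ = 0 := by rw [hd]; rfl
      rw [coboundary_insert (z₁ - z₂) s hs h0 hins hins2] at e1
      have hz : ∀ a ∈ s, D (z₁ - z₂) (insert 0 s) hins2 a = 0 := by
        intro a ha
        have hane : (0 : Fin (n+1)) ≠ a := fun hc => h0 (hc ▸ ha)
        rw [D, dif_pos (Finset.mem_insert_of_mem ha)]
        have h0m : (0:Fin (n+1)) ∈ (insert 0 s).erase a :=
          Finset.mem_erase.2 ⟨hane, Finset.mem_insert_self 0 s⟩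
        have hv := h ⟨(insert 0 s).erase a, by
            rw [Finset.card_erase_of_mem (Finset.mem_insert_of_mem ha), hins2]; omega⟩ h0m
        show _ • (z₁ _ - z₂ _) = (0 : π)
        rw [hv, sub_self, smul_zero]
      rw [Finset.sum_congr rfl hz, Finset.sum_const_zero, add_zero] at e1
      exact e1
  funext s
  have := key s
  rwa [Pi.sub_apply, sub_eq_zero] at this

/-- extension by zero of data on faces containing `0`. -/
def ext0 (g : {s : SimplexFace n k // (0:Fin (n+1)) ∈ s.1} → π) : Cochain n k π :=
  fun s => if h : (0:Fin (n+1)) ∈ s.1 then g ⟨s, h⟩ else 0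

/-- a cocycle is determined freely by its values on faces containing the vertex `0`. -/
def cocycleEquiv :
    {z : Cochain n k π // coboundary z = 0} ≃ ({s : SimplexFace n k // (0:Fin (n+1)) ∈ s.1} → π) where
  toFun z s := z.1 s.1
  invFun g := ⟨ext0 g - cone (coboundary (ext0 g)), by
    rw [coboundary_sub]
    have h := homotopy (coboundary (ext0 g))
    rw [coboundary_coboundary, cone_zero, add_zero] at h
    rw [h, sub_self]⟩
  left_inv z := by
    refine Subtype.ext (cocycle_eq_of_restr_eq _ _ ?_ z.2 ?_)
    · rw [coboundary_sub]
      have h := homotopy (coboundary (ext0 fun s => z.1 s.1))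
      rw [coboundary_coboundary, cone_zero, add_zero] at h
      rw [h, sub_self]
    · intro s h0
      show ext0 (fun u => z.1 u.1) s - cone (coboundary (ext0 fun u => z.1 u.1)) s = z.1 s
      rw [show cone (coboundary (ext0 fun u => z.1 u.1)) s = 0 from dif_pos h0, sub_zero,
        ext0, dif_pos h0]
  right_inv g := by
    funext s
    show ext0 g s.1 - cone (coboundary (ext0 g)) s.1 = g s
    rw [show cone (coboundary (ext0 g)) s.1 = 0 from dif_pos s.2, sub_zero, ext0, dif_pos s.2]

instance instFTFace : Fintype (SimplexFace n k) :=
  inferInstanceAs (Fintype {s : Finset (Fin (n+1)) // s.card = k + 1})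

instance instDEqFace : DecidableEq (SimplexFace n k) :=
  inferInstanceAs (DecidableEq {s : Finset (Fin (n+1)) // s.card = k + 1})

lemma card_faceZero (n k : ℕ) :
    Fintype.card {s : SimplexFace n k // (0:Fin (n+1)) ∈ s.1} = n.choose k := by
  have hchoose : Fintype.card {t : Finset (Fin n) // t.card = k} = n.choose k := by
    rw [Fintype.card_finset_len, Fintype.card_fin]
  rw [← hchoose]
  symm
  have h0map : ∀ (u : Finset (Fin n)), (0:Fin (n+1)) ∉ u.map (Fin.succEmb n) := by
    intro u hc
    rw [Finset.mem_map] at hc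
    obtain ⟨y, -, hy⟩ := hc
    exact Fin.succ_ne_zero y hy
  refine Fintype.card_of_bijective (f := fun t =>
    (⟨⟨insert 0 (t.1.map (Fin.succEmb n)), by
      rw [Finset.card_insert_of_notMem (h0map t.1), Finset.card_map, t.2]⟩,
      Finset.mem_insert_self 0 _⟩ :
        {s : SimplexFace n k // (0:Fin (n+1)) ∈ s.1})) ⟨?_, ?_⟩
  · intro t t' h
    have h := congrArg Subtype.val (Subtype.ext_iff.1 h)
    apply Subtype.ext
    apply Finset.map_injective (Fin.succEmb n)
    have h' : insert 0 (t.1.map (Fin.succEmb n)) = insert 0 (t'.1.map (Fin.succEmb n)) := h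
    rw [← Finset.erase_insert (h0map t.1), h', Finset.erase_insert (h0map t'.1)]
  · rintro ⟨⟨s, hcard⟩, h0⟩
    refine ⟨⟨(s.erase 0).attach.map
      ⟨fun x => (x.1).pred (Finset.ne_of_mem_erase x.2),
        fun x y hxy => Subtype.ext (Fin.pred_inj.1 hxy)⟩, by
      rw [Finset.card_map, Finset.card_attach, Finset.card_erase_of_mem h0, hcard]; omega⟩, ?_⟩
    apply Subtype.ext
    apply Subtype.ext
    show insert 0 _ = s
    ext x
    rw [Finset.map_map]
    constructor
    · intro hx
      rcases Finset.mem_insert.1 hx with rfl | hx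
      · exact h0
      · obtain ⟨y, -, rfl⟩ := Finset.mem_map.1 hx
        show ((y.1).pred (Finset.ne_of_mem_erase y.2)).succ ∈ s
        rw [Fin.succ_pred]
        exact Finset.mem_of_mem_erase y.2
    · intro hx
      apply Finset.mem_insert.2
      by_cases hx0 : x = 0
      · exact Or.inl hx0
      · refine Or.inr (Finset.mem_map.2 ⟨⟨x, Finset.mem_erase.2 ⟨hx0, hx⟩⟩,
          Finset.mem_attach _ _, ?_⟩)
        exact Fin.succ_pred x hx0

end Simpx

/-- For a finite abelian group `π` and `k ≤ n`, every nonempty fiber of the coboundary map on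
`k`-cochains of the standard `n`-simplex has the same cardinality as the set of `k`-cocycles,
namely `|π| ^ (n choose k)`. -/
theorem card_coboundary_fiber (n k : ℕ) (hkn : k ≤ n) (π : Type*) [AddCommGroup π] [Fintype π]
    (w : Cochain n (k + 1) π)
    (hw : w ∈ Set.range (coboundary : Cochain n k π → Cochain n (k + 1) π)) :
    Nat.card {z : Cochain n k π // coboundary z = w} =
        Nat.card {z : Cochain n k π // coboundary z = 0} ∧
      Nat.card {z : Cochain n k π // coboundary z = w} = Fintype.card π ^ n.choose k := by
  obtain ⟨z₀, hz₀⟩ := hw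
  have e1 : {z : Cochain n k π // coboundary z = w} ≃ {z : Cochain n k π // coboundary z = 0} :=
    { toFun := fun z => ⟨z.1 - z₀, by rw [Simpx.coboundary_sub, z.2, hz₀, sub_self]⟩
      invFun := fun z => ⟨z.1 + z₀, by rw [Simpx.coboundary_add, z.2, hz₀, zero_add]⟩
      left_inv := fun z => Subtype.ext (sub_add_cancel z.1 z₀)
      right_inv := fun z => Subtype.ext (add_sub_cancel_right z.1 z₀) }
  have h1 : Nat.card {z : Cochain n k π // coboundary z = w} =
      Nat.card {z : Cochain n k π // coboundary z = 0} := Nat.card_congr e1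
  refine ⟨h1, ?_⟩
  rw [h1, Nat.card_congr Simpx.cocycleEquiv, Nat.card_eq_fintype_card, Fintype.card_fun,
    Simpx.card_faceZero]
end

section
/- Let p be a prime, R = ℤ_(p) the localization of ℤ at (p), ι a finite type, and ℓ a natural number. If f : (ι → R) → (Fin ℓ → R) is a surjective R-linear map, then there exists an injective function t : Fin ℓ → ι such that the family (f(e_{t(j)}))_{j ∈ Fin ℓ} of images of the corresponding standard basis vectors is a basis of the free R-module Fin ℓ → R. -/
instance spanIntPrime (p : ℕ) [hp : Fact p.Prime] : (Ideal.span {(p : ℤ)}).IsPrime :=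
  (Ideal.span_singleton_prime (by exact_mod_cast hp.out.ne_zero)).mpr
    (Nat.prime_iff_prime_int.mp hp.out)

/-- `ℤ_(p)`, the localization of `ℤ` at the prime ideal `(p)`. -/
abbrev IntLoc (p : ℕ) [Fact p.Prime] : Type := Localization.AtPrime (Ideal.span {(p : ℤ)})

section Aux

variable {R : Type*} [CommRing R] [IsLocalRing R] {n : ℕ}

/-- Componentwise residue map. -/
noncomputable def resPi (R : Type*) [CommRing R] [IsLocalRing R] (n : ℕ) :
    (Fin n → R) →ₗ[R] (Fin n → IsLocalRing.ResidueField R) :=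
  LinearMap.compLeft (Algebra.linearMap R (IsLocalRing.ResidueField R)) (Fin n)

lemma resPi_apply (x : Fin n → R) (j : Fin n) :
    resPi R n x j = IsLocalRing.residue R (x j) := rfl

lemma resPi_surjective : Function.Surjective (resPi R n) := by
  intro y
  choose z hz using fun j => IsLocalRing.residue_surjective (R := R) (y j)
  exact ⟨z, funext fun j => hz j⟩

lemma pi_eq_sum_single (x : Fin n → R) :
    x = ∑ j : Fin n, x j • (Pi.single j 1 : Fin n → R) := by
  ext i
  rw [Finset.sum_apply]
  simp [Pi.single_apply, eq_comm]

lemma ker_resPi_le (x : Fin n → R) (hx : resPi R n x = 0) :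
    x ∈ (IsLocalRing.maximalIdeal R) • (⊤ : Submodule R (Fin n → R)) := by
  rw [pi_eq_sum_single x]
  refine Submodule.sum_mem _ fun j _ => Submodule.smul_mem_smul ?_ Submodule.mem_top
  have : IsLocalRing.residue R (x j) = 0 := congrFun hx j
  exact (Ideal.Quotient.eq_zero_iff_mem).mp this

end Aux

/-- If `f : (ι → ℤ_(p)) → (Fin ℓ → ℤ_(p))` is a surjective `ℤ_(p)`-linear map from a finite
function module, then one can choose `ℓ` distinct standard basis vectors whose images under
`f` form a basis of the free module `Fin ℓ → ℤ_(p)`. -/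
theorem exists_basis_of_surjective (p : ℕ) [Fact p.Prime]
    (ι : Type) [Finite ι] [DecidableEq ι] (ℓ : ℕ)
    (f : (ι → IntLoc p) →ₗ[IntLoc p] (Fin ℓ → IntLoc p)) (hf : Function.Surjective f) :
    ∃ t : Fin ℓ → ι, Function.Injective t ∧
      ∃ b : Module.Basis (Fin ℓ) (IntLoc p) (Fin ℓ → IntLoc p),
        ∀ j : Fin ℓ, b j = f (Pi.single (t j) 1) := by
  classical
  cases nonempty_fintype ι
  set R := IntLoc p with hR
  set k := IsLocalRing.ResidueField R with hk
  set π := resPi R ℓ with hπdef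
  set v : ι → (Fin ℓ → R) := fun i => f (Pi.single i 1) with hvdef
  -- Step 1: the images of the standard basis vectors span everything
  have hv : Submodule.span R (Set.range v) = ⊤ := by
    have h1 : Submodule.span R (Set.range fun i : ι => (Pi.single i 1 : ι → R)) = ⊤ := by
      rw [eq_top_iff]
      intro x _
      rw [show x = ∑ i : ι, x i • (Pi.single i 1 : ι → R) by
        ext j; rw [Finset.sum_apply]; simp [Pi.single_apply, eq_comm]]
      exact Submodule.sum_mem _ fun i _ =>
        Submodule.smul_mem _ _ (Submodule.subset_span ⟨i, rfl⟩)
    have : Set.range v = f '' Set.range (fun i : ι => (Pi.single i 1 : ι → R)) := by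
      rw [← Set.range_comp]; rfl
    rw [this, ← Submodule.map_span, h1, Submodule.map_top, LinearMap.range_eq_top.mpr hf]
  -- Step 2: the residues span the residue vector space
  have h2 : Submodule.span R (Set.range (π ∘ v)) = ⊤ := by
    rw [Set.range_comp, ← Submodule.map_span, hv, Submodule.map_top,
      LinearMap.range_eq_top.mpr resPi_surjective]
  have hπv : Submodule.span k (Set.range (π ∘ v)) = ⊤ := by
    rw [eq_top_iff]
    intro x _
    have hx : x ∈ Submodule.span R (Set.range (π ∘ v)) := h2 ▸ Submodule.mem_top
    exact Submodule.span_le_restrictScalars R k _ hx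
  -- Step 3: select a linearly independent spanning subfamily over k
  obtain ⟨s, hs_sub, hs_span, hs_li⟩ := exists_linearIndependent k (Set.range (π ∘ v))
  have hs_span' : Submodule.span k s = ⊤ := by rw [hs_span, hπv]
  let B : Module.Basis s k (Fin ℓ → k) := Module.Basis.mk hs_li (by rw [Subtype.range_coe, hs_span'])
  haveI : Fintype s := FiniteDimensional.fintypeBasisIndex B
  have hcard : Fintype.card s = ℓ := by
    rw [← Module.finrank_eq_card_basis B]
    simp
  let e : Fin ℓ ≃ s := (Fintype.equivFinOfCardEq hcard).symm
  have hsel : ∀ x : s, ∃ i : ι, π (v i) = (x : Fin ℓ → k) := fun x => hs_sub x.2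
  choose g hg using hsel
  have hginj : Function.Injective g := fun x y hxy => by
    apply Subtype.ext
    rw [← hg x, ← hg y, hxy]
  refine ⟨fun j => g (e j), fun j₁ j₂ h => e.injective (hginj h), ?_⟩
  set t : Fin ℓ → ι := fun j => g (e j) with htdef
  set w : Fin ℓ → (Fin ℓ → R) := fun j => v (t j) with hwdef
  have hπw : ∀ j, π (w j) = ((e j : s) : Fin ℓ → k) := fun j => hg (e j)
  -- Step 4: Nakayama — the w j span over R
  let B' : Module.Basis (Fin ℓ) k (Fin ℓ → k) := B.reindex e.symm
  have hB' : ∀ j, B' j = π (w j) := by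
    intro j
    rw [hπw]
    simp [B', Module.Basis.reindex_apply, B, Module.Basis.mk_apply]
  have hw_span : Submodule.span R (Set.range w) = ⊤ := by
    have hfg : (⊤ : Submodule R (Fin ℓ → R)).FG := Module.Finite.fg_top
    rw [eq_top_iff]
    refine Submodule.le_of_le_smul_of_le_jacobson_bot hfg
      (IsLocalRing.jacobson_eq_maximalIdeal ⊥ bot_ne_top).ge ?_
    intro x _
    -- write π x in terms of the basis B'
    obtain ⟨r, hr⟩ : ∃ r : Fin ℓ → R, ∀ j, IsLocalRing.residue R (r j) = B'.repr (π x) j := by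
      choose r hr using fun j => IsLocalRing.residue_surjective (R := R) (B'.repr (π x) j)
      exact ⟨r, hr⟩
    set y := ∑ j, r j • w j with hydef
    have hy_mem : y ∈ Submodule.span R (Set.range w) :=
      Submodule.sum_mem _ fun j _ =>
        Submodule.smul_mem _ _ (Submodule.subset_span ⟨j, rfl⟩)
    have hπy : π y = π x := by
      rw [hydef, map_sum]
      have : ∀ j, π (r j • w j) = B'.repr (π x) j • B' j := by
        intro j
        rw [map_smul, hB' j, ← hr j]
        exact (algebraMap_smul k (r j) (π (w j))).symm
      rw [Finset.sum_congr rfl fun j _ => this j]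
      exact B'.sum_repr (π x)
    have hxy : x - y ∈ (IsLocalRing.maximalIdeal R) • (⊤ : Submodule R (Fin ℓ → R)) := by
      apply ker_resPi_le
      rw [map_sub, hπy, sub_self]
    have : x = (x - y) + y := by ring
    rw [this]
    exact Submodule.add_mem _ (Submodule.mem_sup_right hxy)
      (Submodule.mem_sup_left hy_mem)
  -- Step 5: a spanning family of size ℓ in R^ℓ is a basis
  let bf : Module.Basis (Fin ℓ) R (Fin ℓ → R) := Pi.basisFun R (Fin ℓ)
  let G : (Fin ℓ → R) →ₗ[R] (Fin ℓ → R) := bf.constr R w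
  have hGsurj : Function.Surjective G := by
    rw [← LinearMap.range_eq_top, Module.Basis.constr_range, hw_span]
  have hGinj : Function.Injective G :=
    OrzechProperty.injective_of_surjective_endomorphism G hGsurj
  let E : (Fin ℓ → R) ≃ₗ[R] (Fin ℓ → R) := LinearEquiv.ofBijective G ⟨hGinj, hGsurj⟩
  refine ⟨bf.map E, fun j => ?_⟩
  have : (bf.map E) j = G (bf j) := rfl
  rw [this, Module.Basis.constr_basis]
end

section
/- For every real constant c ≥ 0 there exists a real constant c' ≥ 0 such that for every natural number d ≥ 2 and all reals m ≥ 1, h ≥ 2, and ν ≥ 1: Σ_{ℓ=0}^{d+2} ∏_{j=2}^{d+1} ( exp( m·ν·exp( j·log h + c·(log j)³ ) ) )^((ℓ choose j)) ≤ exp( m·h·ν·exp( d·log(2h) + c'·(log d)³ ) ). (This is the arithmetic content of the bound on the number of simplices of the (d+2)-skeleton of the (d+1)-st Postnikov stage, obtained by substituting the homotopy-group bound |π_j(X)| ≤ exp(m·log N·exp(j·log h + O((log j)³))) with ν = log N into the product formula |sk_n(P_k)| ≤ Σ_{ℓ=0}^{n} ∏_{j=2}^{k} |π_j(X)|^((ℓ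 choose j)).) -/
/-!
Every exponent `m ν exp(j log h + c (log j)³)` with `j ≤ d + 1` is at most
`B = m ν h^(d+1) exp(c (log (d+1))³)`, and `∑_j (ℓ choose j) ≤ 2^ℓ`, so the `ℓ`-th summand is at
most `exp(2^ℓ B)`. As `B ≥ 1` these bounds more than double from one `ℓ` to the next, so the sum
is at most `exp(2^(d+3) B) = exp(m h ν (2h)^d · 8 exp(c (log (d+1))³))`. Finally
`log (d+1) ≤ 2 log d` and `8 ≤ exp(7 (log d)³)` absorb everything into `c' = 8c + 7`.
-/

open Real Finset

theorem Nat.sum_choose_le_two_pow (s : Finset ℕ) (ℓ : ℕ) : ∑ j ∈ s, ℓ.choose j ≤ 2 ^ ℓ := by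
  rw [← Nat.sum_range_choose ℓ, ← sum_filter_of_ne (p := (· < ℓ + 1))
    fun j _ hj => by by_contra! hjℓ; exact hj (Nat.choose_eq_zero_of_lt hjℓ)]
  exact sum_le_sum_of_subset fun j hj => mem_range.2 (mem_filter.1 hj).2

theorem Real.prod_exp_pow_le_exp_sum_mul {ι : Type*} {s : Finset ι} {a : ι → ℝ} {B : ℝ}
    (k : ι → ℕ) (ha : ∀ j ∈ s, a j ≤ B) :
    ∏ j ∈ s, exp (a j) ^ k j ≤ exp ((∑ j ∈ s, k j : ℝ) * B) := by
  rw [sum_mul, exp_sum]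
  exact prod_le_prod (fun _ _ => by positivity) fun j hj => by
    rw [← exp_nat_mul]; exact exp_le_exp.2 (mul_le_mul_of_nonneg_left (ha j hj) (by positivity))

theorem Real.prod_exp_pow_choose_le {s : Finset ℕ} {a : ℕ → ℝ} {B : ℝ} (hB : 0 ≤ B)
    (ha : ∀ j ∈ s, a j ≤ B) (ℓ : ℕ) : ∏ j ∈ s, exp (a j) ^ ℓ.choose j ≤ exp (2 ^ ℓ * B) := by
  refine (prod_exp_pow_le_exp_sum_mul _ ha).trans (exp_le_exp.2 ?_)
  gcongr
  exact_mod_cast Nat.sum_choose_le_two_pow s ℓ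

theorem Real.sum_range_exp_two_pow_mul_le {B : ℝ} (hB : 1 ≤ B) (n : ℕ) :
    ∑ ℓ ∈ range n, exp (2 ^ ℓ * B) ≤ exp (2 ^ n * B) := by
  induction n with
  | zero => simpa using (exp_pos _).le
  | succ n ih =>
    have two_le : 2 ≤ exp (2 ^ n * B) := by
      have : 1 ≤ 2 ^ n * B := one_le_mul_of_one_le_of_one_le (one_le_pow₀ one_le_two) hB
      linarith [add_one_le_exp (2 ^ n * B)]
    calc ∑ ℓ ∈ range (n + 1), exp (2 ^ ℓ * B)
        ≤ exp (2 ^ n * B) + exp (2 ^ n * B) := by rw [sum_range_succ]; gcongr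
      _ ≤ exp (2 ^ n * B) * exp (2 ^ n * B) := by nlinarith
      _ = exp (2 ^ (n + 1) * B) := by rw [← exp_add]; ring_nf

theorem Real.exp_mul_log_add_le {c h : ℝ} (hc : 0 ≤ c) (hh : 1 ≤ h) {j n : ℕ} (hj : 1 ≤ j)
    (hjn : j ≤ n) : exp (j * log h + c * log j ^ 3) ≤ h ^ n * exp (c * log n ^ 3) := by
  rw [exp_add, exp_nat_mul, exp_log (by linarith)]
  have hlog : log j ≤ log n := log_le_log (by exact_mod_cast hj) (by exact_mod_cast hjn)
  have : 0 ≤ log j := log_nonneg (by exact_mod_cast hj)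
  gcongr

theorem Real.log_add_one_le_two_mul_log {x : ℝ} (hx : 2 ≤ x) : log (x + 1) ≤ 2 * log x := by
  calc log (x + 1) ≤ log (x ^ 2) := log_le_log (by linarith) (by nlinarith)
    _ = 2 * log x := by rw [log_pow]; norm_num

theorem Real.eight_le_exp_seven_mul_log_pow_three {x : ℝ} (hx : 2 ≤ x) :
    8 ≤ exp (7 * log x ^ 3) := by
  have hlog : 0.69 < log x := by
    linarith [log_two_gt_d9, log_le_log two_pos hx]
  calc (8 : ℝ) = 2 ^ 3 := by norm_num
    _ ≤ x ^ 3 := by gcongr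
    _ = exp ((3 : ℕ) * log x) := by rw [← log_pow, exp_log (by positivity)]
    _ ≤ exp (7 * log x ^ 3) := by
      have : 3 ≤ 7 * log x ^ 2 := by nlinarith
      exact exp_le_exp.2 (by push_cast; nlinarith)

theorem Real.eight_mul_exp_log_add_one_le {c x : ℝ} (hc : 0 ≤ c) (hx : 2 ≤ x) :
    8 * exp (c * log (x + 1) ^ 3) ≤ exp ((8 * c + 7) * log x ^ 3) := by
  have hlog : log (x + 1) ^ 3 ≤ (2 * log x) ^ 3 :=
    pow_le_pow_left₀ (log_nonneg (by linarith)) (log_add_one_le_two_mul_log hx) 3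
  calc 8 * exp (c * log (x + 1) ^ 3) ≤ exp (7 * log x ^ 3) * exp (c * (8 * log x ^ 3)) := by
        gcongr
        · exact eight_le_exp_seven_mul_log_pow_three hx
        · linarith
    _ = exp ((8 * c + 7) * log x ^ 3) := by rw [← exp_add]; ring_nf

open Real in
/-- For every `c ≥ 0` there is `c' ≥ 0` such that for every `d ≥ 2` and all reals `m ≥ 1`,
`h ≥ 2`, `ν ≥ 1`,
`Σ_{ℓ=0}^{d+2} ∏_{j=2}^{d+1} exp(m·ν·exp(j·log h + c·(log j)³)) ^ (ℓ choose j)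
  ≤ exp(m·h·ν·exp(d·log(2h) + c'·(log d)³))`. -/
theorem postnikov_stage_size_bound :
    ∀ c : ℝ, 0 ≤ c → ∃ c' : ℝ, 0 ≤ c' ∧
      ∀ d : ℕ, 2 ≤ d → ∀ m h ν : ℝ, 1 ≤ m → 2 ≤ h → 1 ≤ ν →
        ∑ ℓ ∈ Finset.range (d + 3), ∏ j ∈ Finset.Icc 2 (d + 1),
            (Real.exp (m * ν *
              Real.exp ((j : ℝ) * Real.log h + c * (Real.log j) ^ 3))) ^ (ℓ.choose j) ≤
          Real.exp (m * h * ν *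
            Real.exp ((d : ℝ) * Real.log (2 * h) + c' * (Real.log d) ^ 3)) := by
  intro c hc
  refine ⟨8 * c + 7, by positivity, fun d hd m h ν hm hh hν => ?_⟩
  have hd' : (2 : ℝ) ≤ d := by exact_mod_cast hd
  set E := exp (c * log ((d + 1 : ℕ) : ℝ) ^ 3)
  set B := m * ν * (h ^ (d + 1) * E)
  have hB : 1 ≤ B := one_le_mul_of_one_le_of_one_le (one_le_mul_of_one_le_of_one_le hm hν)
    (one_le_mul_of_one_le_of_one_le (one_le_pow₀ (by linarith)) (one_le_exp (by positivity)))
  have hfactor : ∀ j ∈ Icc 2 (d + 1), m * ν * exp (j * log h + c * log j ^ 3) ≤ B :=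
    fun j hj => mul_le_mul_of_nonneg_left (exp_mul_log_add_le hc (by linarith)
      (by linarith [(mem_Icc.1 hj).1]) (mem_Icc.1 hj).2) (by positivity)
  have hE : 8 * E ≤ exp ((8 * c + 7) * log d ^ 3) := by
    simpa only [E, Nat.cast_succ] using eight_mul_exp_log_add_one_le hc hd'
  calc _ ≤ ∑ ℓ ∈ range (d + 3), exp (2 ^ ℓ * B) :=
        sum_le_sum fun ℓ _ => prod_exp_pow_choose_le (by linarith) hfactor ℓ
    _ ≤ exp (2 ^ (d + 3) * B) := sum_range_exp_two_pow_mul_le hB _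
    _ = exp (m * h * ν * (2 * h) ^ d * (8 * E)) := by congr 1; ring
    _ ≤ exp (m * h * ν * (2 * h) ^ d * exp ((8 * c + 7) * log d ^ 3)) := by gcongr
    _ = _ := by rw [exp_add, exp_nat_mul, exp_log (by positivity), mul_assoc (m * h * ν)]
end
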